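/- Define g : ℝ → ℝ by g(z) := z·(2Φ(z) − 1) + 2φ(z), where Φ and φ are the CDF and PDF of the standard normal distribution. Then g is strictly convex on ℝ. -/
import Mathlib

open MeasureTheory

/-- The probability density function of the standard normal distribution `N(0,1)`. -/
noncomputable def stdNormalPDF (u : ℝ) : ℝ :=
  Real.exp (-u ^ 2 / 2) / Real.sqrt (2 * Real.pi)

/-- The cumulative distribution function of the standard normal distribution `N(0,1)`. -/
noncomputable def stdNormalCDF (z : ℝ) : ℝ :=
  ∫ u in Set.Iic z, stdNormalPDF u

lemma stdNormalPDF_pos (u : ℝ) : 0 < stdNormalPDF u :=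
  div_pos (Real.exp_pos _) (Real.sqrt_pos.2 (by positivity))

lemma continuous_stdNormalPDF : Continuous stdNormalPDF := by
  unfold stdNormalPDF
  fun_prop

lemma integrable_stdNormalPDF : Integrable stdNormalPDF := by
  have h : Integrable (fun u : ℝ => Real.exp (-(1/2) * u ^ 2)) :=
    integrable_exp_neg_mul_sq (by norm_num)
  have := h.div_const (Real.sqrt (2 * Real.pi))
  refine this.congr ?_
  filter_upwards with u
  simp only [stdNormalPDF]
  ring_nf

lemma hasDerivAt_stdNormalCDF (z : ℝ) :
    HasDerivAt stdNormalCDF (stdNormalPDF z) z := by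
  have key : ∀ x : ℝ, stdNormalCDF x = stdNormalCDF 0 + ∫ t in (0:ℝ)..x, stdNormalPDF t := by
    intro x
    have := intervalIntegral.integral_Iic_sub_Iic
        (integrable_stdNormalPDF.integrableOn (s := Set.Iic 0))
        (integrable_stdNormalPDF.integrableOn (s := Set.Iic x))
    simp only [stdNormalCDF]
    linarith [this]
  have hD : HasDerivAt (fun x => stdNormalCDF 0 + ∫ t in (0:ℝ)..x, stdNormalPDF t)
      (stdNormalPDF z) z := by
    have := (intervalIntegral.integral_hasDerivAt_right
        (f := stdNormalPDF) (a := 0) (b := z)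
        (integrable_stdNormalPDF.intervalIntegrable)
        (continuous_stdNormalPDF.stronglyMeasurableAtFilter _ _)
        continuous_stdNormalPDF.continuousAt)
    simpa using this.const_add (stdNormalCDF 0)
  exact hD.congr_of_eventuallyEq (Filter.Eventually.of_forall key)

lemma hasDerivAt_stdNormalPDF (z : ℝ) :
    HasDerivAt stdNormalPDF (-z * stdNormalPDF z) z := by
  have h1 : HasDerivAt (fun u : ℝ => -u ^ 2 / 2) (-z) z := by
    have := ((hasDerivAt_pow 2 z).neg).div_const 2
    simpa using this.congr_deriv (by ring)
  have h2 := (h1.exp).div_const (Real.sqrt (2 * Real.pi))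
  refine h2.congr_deriv ?_
  simp [stdNormalPDF]
  ring

lemma hasDerivAt_g (z : ℝ) :
    HasDerivAt (fun z : ℝ => z * (2 * stdNormalCDF z - 1) + 2 * stdNormalPDF z)
      (2 * stdNormalCDF z - 1) z := by
  have h1 : HasDerivAt (fun z : ℝ => z * (2 * stdNormalCDF z - 1))
      (1 * (2 * stdNormalCDF z - 1) + z * (2 * stdNormalPDF z)) z :=
    (hasDerivAt_id z).mul
      (((hasDerivAt_stdNormalCDF z).const_mul 2).sub_const 1)
  have h2 := (hasDerivAt_stdNormalPDF z).const_mul 2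
  have := h1.add h2
  refine this.congr_deriv ?_
  ring

lemma strictMono_stdNormalCDF : StrictMono stdNormalCDF := by
  intro x y hxy
  have h := intervalIntegral.integral_Iic_sub_Iic
      (integrable_stdNormalPDF.integrableOn (s := Set.Iic x))
      (integrable_stdNormalPDF.integrableOn (s := Set.Iic y))
  have hpos : 0 < ∫ t in x..y, stdNormalPDF t :=
    intervalIntegral.intervalIntegral_pos_of_pos
      (integrable_stdNormalPDF.intervalIntegrable) stdNormalPDF_pos hxy
  have : stdNormalCDF y - stdNormalCDF x = ∫ t in x..y, stdNormalPDF t := h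
  linarith

/-- `g(z) = z·(2Φ(z) − 1) + 2φ(z)` is strictly convex on `ℝ`. -/
theorem g_strictConvexOn :
    StrictConvexOn ℝ (Set.univ : Set ℝ)
      (fun z : ℝ => z * (2 * stdNormalCDF z - 1) + 2 * stdNormalPDF z) := by
  apply StrictMono.strictConvexOn_univ_of_deriv
  · have : Differentiable ℝ (fun z : ℝ => z * (2 * stdNormalCDF z - 1) + 2 * stdNormalPDF z) :=
      fun z => (hasDerivAt_g z).differentiableAt
    exact this.continuous
  · have hd : (deriv fun z : ℝ => z * (2 * stdNormalCDF z - 1) + 2 * stdNormalPDF z)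
        = fun z => 2 * stdNormalCDF z - 1 := by
      funext z; exact (hasDerivAt_g z).deriv
    rw [hd]
    intro x y hxy
    have := strictMono_stdNormalCDF hxy
    simp only
    linarith
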